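/- If X is a symmetrizable operator, then its two operator norms satisfy ‖X‖_{B(H)} ≤ ‖X‖_{B(E)}, where ‖X‖_{B(H)} is the norm of its extension to H. -/

import Mathlib

/-!
If `Y = X ^ m`, symmetry gives `‖ι (Y f)‖ ^ 2 = ⟪ι f, ι (Y ^ 2 f)⟫ ≤ ‖ι f‖ * ‖ι (Y ^ 2 f)‖`.
Iterating with `m = 1, 2, 4, …` yields
`‖ι (X f)‖ ^ 2 ^ n ≤ ‖ι f‖ ^ (2 ^ n - 1) * ‖ι‖ * ‖X‖ ^ 2 ^ n * ‖f‖`, and taking `2 ^ n`-th roots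
as `n → ∞` gives `‖ι (X f)‖ ≤ ‖X‖ * ‖ι f‖`: the `E`-norm of `f` disappears in the limit.
Hence `ι ∘ X` extends from the dense range of `ι` to an operator on `H` of norm at most `‖X‖`,
self-adjoint by density.
-/

open scoped InnerProductSpace

theorem le_of_forall_mul_pow_two_pow_le {a x y C : ℝ} (ha : 0 < a) (hy : 0 ≤ y)
    (h : ∀ n : ℕ, a * x ^ 2 ^ n ≤ C * y ^ 2 ^ n) : x ≤ y := by
  by_contra! hyx
  rcases hy.eq_or_lt with rfl | hy
  · have := h 0
    simp only [pow_zero, pow_one, mul_zero] at this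
    exact (mul_pos ha hyx).not_ge this
  have hr : 1 < x / y := (one_lt_div hy).mpr hyx
  obtain ⟨n, hn⟩ := pow_unbounded_of_one_lt (C / a) hr
  have h_le : (x / y) ^ 2 ^ n ≤ C / a := by
    rw [div_pow, div_le_div_iff₀ (by positivity) ha, mul_comm]
    exact h n
  exact (hn.trans_le ((pow_le_pow_right₀ hr.le Nat.lt_two_pow_self.le).trans h_le)).false

theorem ContinuousLinearMap.isSelfAdjoint_of_denseRange {𝕜 H α : Type*} [RCLike 𝕜]
    [NormedAddCommGroup H] [InnerProductSpace 𝕜 H] [CompleteSpace H]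
    {T : H →L[𝕜] H} {e : α → H} (he : DenseRange e)
    (h : ∀ a b, ⟪T (e a), e b⟫_𝕜 = ⟪e a, T (e b)⟫_𝕜) : IsSelfAdjoint T :=
  isSelfAdjoint_iff_isSymmetric.mpr fun x y =>
    he.induction_on₂ (p := fun x y => ⟪T x, y⟫_𝕜 = ⟪x, T y⟫_𝕜)
      (isClosed_eq (by fun_prop) (by fun_prop)) h x y

section

variable {𝕜 E H : Type*} [RCLike 𝕜] [NormedAddCommGroup E] [NormedSpace 𝕜 E]
  [NormedAddCommGroup H] [InnerProductSpace 𝕜 H]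

def IsSymmetrizable (ι : E →L[𝕜] H) (X : E →L[𝕜] E) : Prop :=
  ∀ f g, ⟪ι (X f), ι g⟫_𝕜 = ⟪ι f, ι (X g)⟫_𝕜

namespace IsSymmetrizable

variable {ι : E →L[𝕜] H} {X : E →L[𝕜] E}

theorem pow (hX : IsSymmetrizable ι X) (n : ℕ) : IsSymmetrizable ι (X ^ n) := by
  induction n with
  | zero => intro f g; simp
  | succ n ih =>
    intro f g
    have h_left : (X ^ (n + 1)) f = (X ^ n) (X f) := by rw [pow_succ]; rfl
    have h_right : (X ^ (n + 1)) g = X ((X ^ n) g) := by rw [pow_succ']; rfl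
    rw [h_left, h_right, ih, hX]

theorem norm_sq_le (hX : IsSymmetrizable ι X) (m : ℕ) (f : E) :
    ‖ι ((X ^ m) f)‖ ^ 2 ≤ ‖ι f‖ * ‖ι ((X ^ (2 * m)) f)‖ :=
  calc ‖ι ((X ^ m) f)‖ ^ 2 = ‖⟪ι ((X ^ m) f), ι ((X ^ m) f)⟫_𝕜‖ := by
        rw [inner_self_eq_norm_sq_to_K]; simp
    _ = ‖⟪ι f, ι ((X ^ (2 * m)) f)⟫_𝕜‖ := by
        rw [hX.pow m, two_mul, pow_add]; rfl
    _ ≤ ‖ι f‖ * ‖ι ((X ^ (2 * m)) f)‖ := norm_inner_le_norm _ _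

theorem norm_pow_two_pow_le (hX : IsSymmetrizable ι X) (f : E) (n : ℕ) :
    ‖ι (X f)‖ ^ 2 ^ n ≤ ‖ι f‖ ^ (2 ^ n - 1) * ‖ι ((X ^ 2 ^ n) f)‖ := by
  induction n with
  | zero => simp
  | succ n ih =>
    have h_exp : 2 * (2 ^ n - 1) + 1 = 2 ^ (n + 1) - 1 := by
      have := Nat.one_le_two_pow (n := n); rw [pow_succ]; omega
    calc ‖ι (X f)‖ ^ 2 ^ (n + 1) = (‖ι (X f)‖ ^ 2 ^ n) ^ 2 := by rw [pow_succ, pow_mul]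
      _ ≤ (‖ι f‖ ^ (2 ^ n - 1) * ‖ι ((X ^ 2 ^ n) f)‖) ^ 2 := by gcongr
      _ = ‖ι f‖ ^ (2 * (2 ^ n - 1)) * ‖ι ((X ^ 2 ^ n) f)‖ ^ 2 := by rw [mul_pow, ← pow_mul']
      _ ≤ ‖ι f‖ ^ (2 * (2 ^ n - 1)) * (‖ι f‖ * ‖ι ((X ^ (2 * 2 ^ n)) f)‖) := by
          gcongr; exact hX.norm_sq_le _ f
      _ = ‖ι f‖ ^ (2 ^ (n + 1) - 1) * ‖ι ((X ^ 2 ^ (n + 1)) f)‖ := by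
          rw [← mul_assoc, ← pow_succ, h_exp, ← pow_succ']

theorem norm_apply_le (hX : IsSymmetrizable ι X) (f : E) : ‖ι (X f)‖ ≤ ‖X‖ * ‖ι f‖ := by
  rcases (norm_nonneg (ι f)).eq_or_lt with hf | hf
  · have := hX.norm_sq_le 1 f
    rw [← hf, zero_mul, pow_one] at this
    rw [← hf, mul_zero]
    nlinarith [norm_nonneg (ι (X f))]
  refine le_of_forall_mul_pow_two_pow_le (C := ‖ι‖ * ‖f‖) hf (by positivity) fun n => ?_
  have h_pow : ‖ι ((X ^ 2 ^ n) f)‖ ≤ ‖ι‖ * ‖f‖ * ‖X‖ ^ 2 ^ n :=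
    calc ‖ι ((X ^ 2 ^ n) f)‖ ≤ ‖ι‖ * (‖X ^ 2 ^ n‖ * ‖f‖) :=
          ι.le_opNorm_of_le ((X ^ 2 ^ n).le_opNorm f)
      _ ≤ ‖ι‖ * (‖X‖ ^ 2 ^ n * ‖f‖) := by gcongr; exact norm_pow_le' X (by positivity)
      _ = ‖ι‖ * ‖f‖ * ‖X‖ ^ 2 ^ n := by ring
  calc ‖ι f‖ * ‖ι (X f)‖ ^ 2 ^ n ≤ ‖ι f‖ * (‖ι f‖ ^ (2 ^ n - 1) * ‖ι ((X ^ 2 ^ n) f)‖) := by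
        gcongr; exact hX.norm_pow_two_pow_le f n
    _ = ‖ι f‖ ^ 2 ^ n * ‖ι ((X ^ 2 ^ n) f)‖ := by
        rw [← mul_assoc, mul_pow_sub_one (by positivity)]
    _ ≤ ‖ι f‖ ^ 2 ^ n * (‖ι‖ * ‖f‖ * ‖X‖ ^ 2 ^ n) := by gcongr
    _ = ‖ι‖ * ‖f‖ * (‖X‖ * ‖ι f‖) ^ 2 ^ n := by ring

end IsSymmetrizable

end

theorem symmetrizable_norm_le_general
    {E H : Type*} [NormedAddCommGroup E] [NormedSpace ℂ E]
    [NormedAddCommGroup H] [InnerProductSpace ℂ H] [CompleteSpace H]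
    (ι : E →L[ℂ] H) (hdense : DenseRange ι)
    (X : E →L[ℂ] E)
    (hsymm : ∀ f g : E, (inner ℂ (ι (X f)) (ι g) : ℂ) = inner ℂ (ι f) (ι (X g))) :
    ∃ Xbar : H →L[ℂ] H, IsSelfAdjoint Xbar ∧ (∀ f : E, Xbar (ι f) = ι (X f)) ∧
      ‖Xbar‖ ≤ ‖X‖ := by
  have hbound : ∀ f, ‖(ι ∘L X) f‖ ≤ ‖X‖ * ‖ι f‖ := IsSymmetrizable.norm_apply_le hsymm
  set Xbar := (ι ∘L X).toLinearMap.extendOfNorm ι.toLinearMap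
  have hext : ∀ f, Xbar (ι f) = ι (X f) := LinearMap.extendOfNorm_eq hdense ⟨_, hbound⟩
  refine ⟨Xbar, ?_, hext, LinearMap.opNorm_extendOfNorm_le hdense (norm_nonneg X) hbound⟩
  exact ContinuousLinearMap.isSelfAdjoint_of_denseRange hdense fun f g => by
    rw [hext, hext, hsymm]

/-- the two operator norms of a symmetrizable operator satisfy
`‖X‖_{B(H)} ≤ ‖X‖_{B(E)}`: the self-adjoint extension `Xbar` of `X` to `H`
has operator norm at most `‖X‖`. -/
theorem symmetrizable_norm_le
    {E H : Type*} [NormedAddCommGroup E] [NormedSpace ℂ E] [CompleteSpace E]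
    [NormedAddCommGroup H] [InnerProductSpace ℂ H] [CompleteSpace H]
    (ι : E →L[ℂ] H) (hinj : Function.Injective ι) (hdense : DenseRange ι)
    (X : E →L[ℂ] E)
    (hsymm : ∀ f g : E, (inner ℂ (ι (X f)) (ι g) : ℂ) = inner ℂ (ι f) (ι (X g))) :
    ∃ Xbar : H →L[ℂ] H, IsSelfAdjoint Xbar ∧ (∀ f : E, Xbar (ι f) = ι (X f)) ∧
      ‖Xbar‖ ≤ ‖X‖ :=
  symmetrizable_norm_le_general ι hdense X hsymm
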